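/- If ε is an elementary dihomomorphism of a digraph D, then dac(D) − 2 ≤ dac(ε(D)) ≤ dac(D). Moreover, for every digraph D that has at least one pair of nonadjacent vertices, there exists an elementary dihomomorphism ε of D such that dac(ε(D)) = dac(D). -/

import Mathlib

/-- The subset `S` of vertices induces an acyclic subdigraph of the digraph with
arc relation `A` (i.e. there is no directed cycle all of whose vertices lie in `S`). -/
def AcyclicSet {V : Type*} (A : V → V → Prop) (S : Set V) : Prop :=
  ∀ v : V, ¬ Relation.TransGen (fun x y => x ∈ S ∧ y ∈ S ∧ A x y) v v

/-- `c` is an acyclic vertex coloring of the digraph `A` with `k` colors: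
`c` is surjective and every chromatic class induces an acyclic subdigraph. -/
def IsAcyclicColoring {V : Type*} (A : V → V → Prop) {k : ℕ} (c : V → Fin k) : Prop :=
  Function.Surjective c ∧ ∀ i : Fin k, AcyclicSet A {v | c v = i}

/-- `c` is a complete vertex coloring of the digraph `A` with `k` colors:
`c` is surjective and for every ordered pair of distinct colors `(i, j)` there is
an arc `(u, v)` with `c u = i` and `c v = j`. -/
def IsCompleteColoring {V : Type*} (A : V → V → Prop) {k : ℕ} (c : V → Fin k) : Prop :=
  Function.Surjective c ∧
    ∀ i j : Fin k, i ≠ j → ∃ u v : V, A u v ∧ c u = i ∧ c v = j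

/-- The diachromatic number: the largest `k` admitting a complete acyclic `k`-coloring. -/
noncomputable def dac {V : Type*} (A : V → V → Prop) : ℕ :=
  sSup {k | ∃ c : V → Fin k, IsAcyclicColoring A c ∧ IsCompleteColoring A c}

/-- The dichromatic number: the smallest `k` admitting an acyclic `k`-coloring. -/
noncomputable def dc {V : Type*} (A : V → V → Prop) : ℕ :=
  sInf {k | ∃ c : V → Fin k, IsAcyclicColoring A c}

/-- The pseudoachromatic number: the largest `k` admitting a complete `k`-coloring. -/
noncomputable def psi {V : Type*} (A : V → V → Prop) : ℕ :=
  sSup {k | ∃ c : V → Fin k, IsCompleteColoring A c}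

/-- `A` is a tournament: no loops, and for distinct vertices exactly one of the
two possible arcs is present. -/
def IsTournament {V : Type*} (A : V → V → Prop) : Prop :=
  (∀ v : V, ¬ A v v) ∧ ∀ u v : V, u ≠ v → (A u v ↔ ¬ A v u)

/-- The elementary dihomomorphism of the digraph `A` identifying the vertex `u`
with the vertex `v`: the resulting digraph on `V \\ {u}`. -/
def epsRel {V : Type*} (A : V → V → Prop) (u v : V) :
    {w : V // w ≠ u} → {w : V // w ≠ u} → Prop :=
  fun x y =>
    A x.1 y.1 ∨ (x.1 = v ∧ y.1 ≠ v ∧ A u y.1) ∨ (y.1 = v ∧ x.1 ≠ v ∧ A x.1 u)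

/-!
Acyclicity of a vertex set in a finite digraph amounts to the existence of a rank function
that strictly increases along its arcs. Merging two color classes with no arc from the first to the second keeps a coloring acyclic;
merging as long as possible turns any acyclic coloring into a complete one, and classes that
were already joined in both directions are never merged.

Pulling back a complete acyclic coloring of `ε(D)` along `u ↦ v` gives one of `D`: the only
arc that collapses is the single arc between the nonadjacent `u` and `v`, so it creates no
cycle. Conversely, the classes of an optimal coloring of `D` avoiding the colors of `u` and `v`
survive in `ε(D)`; adding the remaining vertices as singletons and merging yields at least
`dac D - 2` colors. Finally, if `D` has a nonadjacent pair, an optimal coloring of `D` has a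
class with two vertices; identifying two successive sources `u`, `v` of that class keeps the
coloring acyclic and complete.
-/

section Diachromatic

open Relation Set Function

variable {V W β : Type*} {A : V → V → Prop}

section Acyclic

variable {S T : Set V}

theorem acyclicSet_of_rank {α : Type*} [Preorder α] (r : V → α)
    (hr : ∀ x ∈ S, ∀ y ∈ S, A x y → r x < r y) : AcyclicSet A S := by
  have hlt : ∀ {a b}, TransGen (fun x y => x ∈ S ∧ y ∈ S ∧ A x y) a b → r a < r b := by
    intro a b h
    induction h with
    | single h => exact hr _ h.1 _ h.2.1 h.2.2
    | tail _ h ih => exact ih.trans (hr _ h.1 _ h.2.1 h.2.2)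
  exact fun x hx => lt_irrefl _ (hlt hx)

theorem AcyclicSet.exists_rank [Finite V] (hS : AcyclicSet A S) :
    ∃ r : V → ℕ, ∀ x ∈ S, ∀ y ∈ S, A x y → r x < r y := by
  refine ⟨fun x => {z | TransGen (fun x y => x ∈ S ∧ y ∈ S ∧ A x y) z x}.ncard,
    fun x hx y hy hxy => ncard_lt_ncard ?_⟩
  refine ssubset_of_subset_not_subset (fun z hz => hz.tail ⟨hx, hy, hxy⟩) fun h => hS x ?_
  exact h (TransGen.single ⟨hx, hy, hxy⟩)

theorem AcyclicSet.of_map {B : W → W → Prop} {R : Set W} (f : W → V)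
    (hf : ∀ x ∈ R, ∀ y ∈ R, B x y → f x ∈ S ∧ f y ∈ S ∧ A (f x) (f y))
    (hS : AcyclicSet A S) : AcyclicSet B R :=
  fun x hx => hS (f x) (TransGen.lift f (fun _ _ h => hf _ h.1 _ h.2.1 h.2.2) x x hx)

theorem AcyclicSet.mono (hST : S ⊆ T) (hT : AcyclicSet A T) : AcyclicSet A S :=
  hT.of_map id fun _ hx _ hy h => ⟨hST hx, hST hy, h⟩

theorem acyclicSet_of_subsingleton (hirr : ∀ v, ¬ A v v) (hS : S.Subsingleton) :
    AcyclicSet A S :=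
  acyclicSet_of_rank (fun _ => 0) fun x hx _ hy h => absurd (hS hx hy ▸ h) (hirr x)

theorem AcyclicSet.union [Finite V] (hS : AcyclicSet A S) (hT : AcyclicSet A T)
    (hST : ∀ x ∈ S, ∀ y ∈ T, ¬ A x y) : AcyclicSet A (S ∪ T) := by
  classical
  obtain ⟨r, hr⟩ := hS.exists_rank
  obtain ⟨r', hr'⟩ := hT.exists_rank
  -- arcs only lead from `T` to `S`, so rank `T` below `S`
  refine acyclicSet_of_rank (fun x => toLex (if x ∈ T then 0 else 1, if x ∈ T then r' x else r x))
    fun x hx y hy hxy => ?_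
  rw [mem_union] at hx hy
  by_cases hxT : x ∈ T <;> by_cases hyT : y ∈ T <;>
    simp only [hxT, hyT, if_true, if_false, Prod.Lex.toLex_lt_toLex]
  · exact Or.inr ⟨trivial, hr' x hxT y hyT hxy⟩
  · exact Or.inl zero_lt_one
  · exact absurd hxy (hST x (hx.resolve_right hxT) y hyT)
  · exact Or.inr ⟨trivial, hr x (hx.resolve_right hxT) y (hy.resolve_right hyT) hxy⟩

theorem AcyclicSet.exists_source [Finite V] (hS : AcyclicSet A S) (hne : S.Nonempty) :
    ∃ u ∈ S, ∀ w ∈ S, ¬ A w u := by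
  obtain ⟨r, hr⟩ := hS.exists_rank
  obtain ⟨u, hu, hmin⟩ := S.exists_min_image r S.toFinite hne
  exact ⟨u, hu, fun w hw h => (hr w hw u hu h).not_ge (hmin w hw)⟩

end Acyclic

section Merge

variable [DecidableEq β] {i j : β}

theorem update_id_eq_update_id {a b : β} (hab : a ≠ b) (h : update id i j a = update id i j b) :
    a = i ∧ b = j ∨ b = i ∧ a = j := by
  simp only [update_apply, id] at h
  split_ifs at h <;> simp_all

theorem range_update_id_comp_ssubset {F : V → β} (hi : i ∈ range F) (hj : j ∈ range F)
    (hij : i ≠ j) : range (update id i j ∘ F) ⊂ range F := by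
  refine ssubset_of_subset_not_subset ?_ fun h => ?_
  · rintro _ ⟨x, rfl⟩
    by_cases hx : F x = i <;> simp [hx, hj]
  · obtain ⟨x, hx⟩ := h hi
    by_cases hx' : F x = i <;> simp_all

end Merge

section Classes

variable (A) in
def ClassesAcyclic (c : V → β) : Prop :=
  ∀ b, AcyclicSet A {x | c x = b}

variable (A) in
def ClassesComplete (c : V → β) : Prop :=
  ∀ x y, c x ≠ c y → ∃ x' y', A x' y' ∧ c x' = c x ∧ c y' = c y

variable {c : V → β}

theorem ClassesAcyclic.update_comp [Finite V] [DecidableEq β] (hc : ClassesAcyclic A c)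
    {i j : β} (hij : ∀ x y, A x y → c x = i → c y ≠ j) :
    ClassesAcyclic A (update id i j ∘ c) := by
  intro b
  have hclass : ∀ x, update id i j (c x) = b → c x = i ∧ b = j ∨ c x = b := by
    intro x hx
    simp only [update_apply, id] at hx
    split_ifs at hx with h
    exacts [Or.inl ⟨h, hx.symm⟩, Or.inr hx]
  by_cases hb : b = j
  · subst hb
    exact ((hc i).union (hc b) fun x hx y hy h => hij x y h hx hy).mono
      fun x hx => (hclass x hx).imp And.left id
  · exact (hc b).mono fun x hx => (hclass x hx).resolve_left fun h => hb h.2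

theorem ClassesAcyclic.exists_complete [Finite V] (hc : ClassesAcyclic A c) {s : Set β}
    (hs : ∀ i ∈ s, ∀ j ∈ s, i ≠ j → ∃ x y, A x y ∧ c x = i ∧ c y = j) :
    ∃ f : β → β, ClassesAcyclic A (f ∘ c) ∧ ClassesComplete A (f ∘ c) ∧ InjOn f s := by
  classical
  -- take a recoloring with as few colors as possible; if some class had no arc to another one,
  -- merging the two would give one with fewer colors
  obtain ⟨f, ⟨hfc, hfs⟩, hmin⟩ := (measure fun f : β → β => (range (f ∘ c)).ncard).wf.has_min
    {f | ClassesAcyclic A (f ∘ c) ∧ InjOn f s} ⟨id, hc, injOn_id s⟩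
  refine ⟨f, hfc, ?_, hfs⟩
  by_contra hcompl
  simp only [ClassesComplete, not_forall, not_exists, not_and] at hcompl
  obtain ⟨x, y, hxy, hno⟩ := hcompl
  refine hmin (update id (f (c x)) (f (c y)) ∘ f) ⟨hfc.update_comp hno, ?_⟩
    (ncard_lt_ncard (range_update_id_comp_ssubset ⟨x, rfl⟩ ⟨y, rfl⟩ hxy))
  intro a ha b hb hab
  by_contra hne
  rcases update_id_eq_update_id (hfs.ne ha hb hne) hab with ⟨h1, h2⟩ | ⟨h1, h2⟩
  · obtain ⟨x', y', h, rfl, rfl⟩ := hs a ha b hb hne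
    exact hno x' y' h h1 h2
  · obtain ⟨x', y', h, rfl, rfl⟩ := hs b hb a ha (Ne.symm hne)
    exact hno x' y' h h1 h2

end Classes

section Dac

variable [Finite V]

theorem bddAbove_dacSet :
    BddAbove {k | ∃ c : V → Fin k, IsAcyclicColoring A c ∧ IsCompleteColoring A c} :=
  ⟨Nat.card V, by
    rintro k ⟨c, hc, -⟩
    simpa using Nat.card_le_card_of_surjective c hc.1⟩

theorem le_dac {k : ℕ} {c : V → Fin k} (hac : IsAcyclicColoring A c)
    (hco : IsCompleteColoring A c) : k ≤ dac A :=
  le_csSup bddAbove_dacSet ⟨c, hac, hco⟩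

theorem ClassesAcyclic.exists_coloring {c : V → β} (hac : ClassesAcyclic A c)
    (hco : ClassesComplete A c) :
    ∃ c' : V → Fin (Nat.card (range c)), IsAcyclicColoring A c' ∧ IsCompleteColoring A c' := by
  let c' := Finite.equivFin (range c) ∘ rangeFactorization c
  have hc' : ∀ x y, c' x = c' y ↔ c x = c y := by
    intro x y
    simp only [c', comp_apply, EmbeddingLike.apply_eq_iff_eq, rangeFactorization, Subtype.mk.injEq]
  have hsurj : Surjective c' :=
    (Finite.equivFin _).surjective.comp rangeFactorization_surjective
  refine ⟨c', ⟨hsurj, fun i => ?_⟩, hsurj, fun i j hij => ?_⟩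
  · obtain ⟨x, rfl⟩ := hsurj i
    simpa only [hc'] using hac (c x)
  · obtain ⟨x, rfl⟩ := hsurj i
    obtain ⟨y, rfl⟩ := hsurj j
    obtain ⟨x', y', h, hx, hy⟩ := hco x y fun h => hij ((hc' x y).2 h)
    exact ⟨x', y', h, (hc' x' x).2 hx, (hc' y' y).2 hy⟩

theorem ClassesAcyclic.ncard_le_dac {c : V → β} (hac : ClassesAcyclic A c) {s : Set β}
    (hsc : s ⊆ range c) (hs : ∀ i ∈ s, ∀ j ∈ s, i ≠ j → ∃ x y, A x y ∧ c x = i ∧ c y = j) :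
    s.ncard ≤ dac A := by
  obtain ⟨f, hfac, hfco, hfs⟩ := hac.exists_complete hs
  obtain ⟨c', hac', hco'⟩ := hfac.exists_coloring hfco
  calc s.ncard ≤ (range (f ∘ c)).ncard := ncard_le_ncard_of_injOn f
        (fun b hb => by obtain ⟨x, rfl⟩ := hsc hb; exact ⟨x, rfl⟩) hfs
    _ = Nat.card (range (f ∘ c)) := (Nat.card_coe_set_eq _).symm
    _ ≤ dac A := le_dac hac' hco'

theorem exists_coloring_dac (hirr : ∀ v, ¬ A v v) :
    ∃ c : V → Fin (dac A), IsAcyclicColoring A c ∧ IsCompleteColoring A c := by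
  have hid : ClassesAcyclic A (id : V → V) := fun _ =>
    acyclicSet_of_subsingleton hirr fun _ hx _ hy => hx.trans hy.symm
  obtain ⟨f, hfac, hfco, -⟩ := hid.exists_complete (s := ∅) (by simp)
  obtain ⟨c, hc⟩ := hfac.exists_coloring hfco
  exact Nat.sSup_mem (s := {k | ∃ c : V → Fin k, _}) ⟨_, c, hc⟩ bddAbove_dacSet

end Dac

section Identification

variable {u v : V}

theorem epsRel_irrefl (hirr : ∀ v, ¬ A v v) (x : {w // w ≠ u}) : ¬ epsRel A u v x x := by
  rintro (h | ⟨h1, h2, -⟩ | ⟨h1, h2, -⟩)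
  exacts [hirr _ h, h2 h1, h2 h1]

open Classical in
noncomputable def epsMap (huv : u ≠ v) (w : V) : {w : V // w ≠ u} :=
  if h : w = u then ⟨v, huv.symm⟩ else ⟨w, h⟩

theorem epsMap_self (huv : u ≠ v) : epsMap huv u = ⟨v, huv.symm⟩ := dif_pos rfl

theorem epsMap_of_ne (huv : u ≠ v) {w : V} (hw : w ≠ u) : epsMap huv w = ⟨w, hw⟩ := dif_neg hw

theorem epsMap_surjective (huv : u ≠ v) : Surjective (epsMap huv) :=
  fun x => ⟨x, epsMap_of_ne huv x.2⟩

theorem epsRel_epsMap (hirr : ∀ v, ¬ A v v) (huv : u ≠ v) {x y : V} (hxy : A x y)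
    (h : ¬(x = u ∧ y = v)) (h' : ¬(x = v ∧ y = u)) :
    epsRel A u v (epsMap huv x) (epsMap huv y) := by
  by_cases hx : x = u
  · subst hx
    have hy : y ≠ x := fun hy => hirr x (hy ▸ hxy)
    rw [epsMap_self, epsMap_of_ne huv hy]
    exact Or.inr (Or.inl ⟨rfl, fun hyv => h ⟨rfl, hyv⟩, hxy⟩)
  by_cases hy : y = u
  · subst hy
    rw [epsMap_self, epsMap_of_ne huv hx]
    exact Or.inr (Or.inr ⟨rfl, fun hxv => h' ⟨hxv, rfl⟩, hxy⟩)
  rw [epsMap_of_ne huv hx, epsMap_of_ne huv hy]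
  exact Or.inl hxy

theorem AcyclicSet.preimage_epsMap [Finite V] (hirr : ∀ v, ¬ A v v) (huv : u ≠ v)
    (hna : ¬(A u v ∧ A v u)) {T : Set {w // w ≠ u}} (hT : AcyclicSet (epsRel A u v) T) :
    AcyclicSet A (epsMap huv ⁻¹' T) := by
  classical
  obtain ⟨r, hr⟩ := hT.exists_rank
  -- the arc between `u` and `v` collapses; rank its head just above its tail
  let head := if A u v then v else u
  refine acyclicSet_of_rank (fun x => 2 * r (epsMap huv x) + if x = head then 1 else 0)
    fun x hx y hy hxy => ?_
  have hmap : epsMap huv v = epsMap huv u := by rw [epsMap_self, epsMap_of_ne]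
  by_cases h : x = u ∧ y = v
  · obtain ⟨rfl, rfl⟩ := h
    simp [head, hxy, huv, hmap]
  by_cases h' : x = v ∧ y = u
  · obtain ⟨rfl, rfl⟩ := h'
    have hvu : ¬ A y x := fun h => hna ⟨h, hxy⟩
    simp [head, hvu, huv.symm, hmap]
  have hlt := hr _ hx _ hy (epsRel_epsMap hirr huv hxy h h')
  split_ifs <;> omega

theorem IsAcyclicColoring.comp_epsMap [Finite V] (hirr : ∀ v, ¬ A v v) (huv : u ≠ v)
    (hna : ¬(A u v ∧ A v u)) {k : ℕ} {c : {w // w ≠ u} → Fin k}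
    (hc : IsAcyclicColoring (epsRel A u v) c) : IsAcyclicColoring A (c ∘ epsMap huv) :=
  ⟨hc.1.comp (epsMap_surjective huv), fun i => (hc.2 i).preimage_epsMap hirr huv hna⟩

theorem IsCompleteColoring.comp_epsMap (huv : u ≠ v) {k : ℕ} {c : {w // w ≠ u} → Fin k}
    (hc : IsCompleteColoring (epsRel A u v) c) : IsCompleteColoring A (c ∘ epsMap huv) := by
  refine ⟨hc.1.comp (epsMap_surjective huv), fun i j hij => ?_⟩
  obtain ⟨x, y, hxy, rfl, rfl⟩ := hc.2 i j hij
  rcases hxy with h | ⟨hx, -, h⟩ | ⟨hy, -, h⟩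
  · exact ⟨x, y, h, by simp [epsMap_of_ne huv x.2], by simp [epsMap_of_ne huv y.2]⟩
  · refine ⟨u, y, h, ?_, by simp [epsMap_of_ne huv y.2]⟩
    simp [epsMap_self, ← hx]
  · refine ⟨x, u, h, by simp [epsMap_of_ne huv x.2], ?_⟩
    simp [epsMap_self, ← hy]

theorem dac_epsRel_le [Finite V] (hirr : ∀ v, ¬ A v v) (huv : u ≠ v) (hna : ¬(A u v ∧ A v u)) :
    dac (epsRel A u v) ≤ dac A :=
  csSup_le_csSup' bddAbove_dacSet fun _ ⟨c, hac, hco⟩ =>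
    ⟨c ∘ epsMap huv, hac.comp_epsMap hirr huv hna, hco.comp_epsMap huv⟩

end Identification

section Restriction

variable {u v : V}

theorem AcyclicSet.epsRel_of_forall_ne {S : Set V} {R : Set {w // w ≠ u}}
    (hS : AcyclicSet A S) (hR : ∀ x ∈ R, x.1 ∈ S ∧ x.1 ≠ v) : AcyclicSet (epsRel A u v) R := by
  refine hS.of_map Subtype.val fun x hx y hy h => ⟨(hR x hx).1, (hR y hy).1, ?_⟩
  rcases h with h | ⟨h, -⟩ | ⟨h, -⟩
  exacts [h, absurd h (hR x hx).2, absurd h (hR y hy).2]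

theorem dac_sub_two_le_dac_epsRel [Finite V] (hirr : ∀ v, ¬ A v v) (u v : V) :
    dac A - 2 ≤ dac (epsRel A u v) := by
  classical
  obtain ⟨ς, hac, hco⟩ := exists_coloring_dac hirr
  -- keep the classes of `ς` other than those of `u` and `v`, and split those two into singletons
  let P : Set (Fin (dac A)) := {ς u, ς v}
  let c : {w // w ≠ u} → Fin (dac A) ⊕ {w // w ≠ u} :=
    fun x => if ς x ∈ P then .inr x else .inl (ς x)
  have hc_inl : ∀ x i, c x = .inl i ↔ ς x = i ∧ i ∉ P := by
    intro x i
    by_cases h : ς x.1 ∈ P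
    · simp only [c, h, if_true, reduceCtorEq, false_iff, not_and, not_not]
      exact fun hi => hi ▸ h
    · simp only [c, h, if_false, Sum.inl.injEq]
      exact ⟨fun hi => ⟨hi, hi ▸ h⟩, And.left⟩
  have hc_inr : ∀ x w, c x = .inr w → x = w := by
    intro x w
    by_cases h : ς x.1 ∈ P <;> simp [c, h]
  have hne_u : ∀ {w}, ς w ∉ P → w ≠ u := fun hw h => hw (h ▸ Or.inl rfl)
  have hcac : ClassesAcyclic (epsRel A u v) c := by
    rintro (i | w)
    · refine (hac.2 i).epsRel_of_forall_ne fun x hx => ?_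
      obtain ⟨hxi, hiP⟩ := (hc_inl x i).1 hx
      exact ⟨hxi, fun h => hiP (hxi ▸ h ▸ Or.inr rfl)⟩
    · exact acyclicSet_of_subsingleton (epsRel_irrefl hirr)
        fun x hx y hy => (hc_inr x w hx).trans (hc_inr y w hy).symm
  let s : Set (Fin (dac A) ⊕ {w // w ≠ u}) := Sum.inl '' Pᶜ
  have hsc : s ⊆ range c := by
    rintro _ ⟨i, hi, rfl⟩
    obtain ⟨w, rfl⟩ := hac.1 i
    exact ⟨⟨w, hne_u hi⟩, (hc_inl _ _).2 ⟨rfl, hi⟩⟩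
  have hs : ∀ a ∈ s, ∀ b ∈ s, a ≠ b → ∃ x y, epsRel A u v x y ∧ c x = a ∧ c y = b := by
    rintro _ ⟨i, hi, rfl⟩ _ ⟨j, hj, rfl⟩ hij
    obtain ⟨x, y, h, rfl, rfl⟩ := hco.2 i j fun h => hij (congrArg Sum.inl h)
    exact ⟨⟨x, hne_u hi⟩, ⟨y, hne_u hj⟩, Or.inl h, (hc_inl _ _).2 ⟨rfl, hi⟩,
      (hc_inl _ _).2 ⟨rfl, hj⟩⟩
  have hcard : dac A - 2 ≤ s.ncard := by
    have hP : P.ncard ≤ 2 := (ncard_insert_le _ _).trans (by simp)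
    rw [ncard_image_of_injective _ Sum.inl_injective, ncard_compl, Nat.card_fin]
    omega
  exact hcard.trans (hcac.ncard_le_dac hsc hs)

theorem IsCompleteColoring.not_injective {k : ℕ} {c : V → Fin k} (hc : IsCompleteColoring A c)
    {p q : V} (hpq : p ≠ q) (hna : ¬(A p q ∧ A q p)) : ¬ Injective c := fun hinj => by
  obtain ⟨x, y, h, hx, hy⟩ := hc.2 (c p) (c q) (hinj.ne hpq)
  obtain ⟨x', y', h', hx', hy'⟩ := hc.2 (c q) (c p) (hinj.ne hpq.symm)
  exact hna ⟨hinj hx ▸ hinj hy ▸ h, hinj hx' ▸ hinj hy' ▸ h'⟩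

theorem Function.Surjective.comp_val_of_eq {c : V → W} (hc : Surjective c) (huv : u ≠ v)
    (h : c u = c v) : Surjective fun x : {w // w ≠ u} => c x := by
  intro i
  obtain ⟨w, rfl⟩ := hc i
  by_cases hw : w = u
  · exact ⟨⟨v, huv.symm⟩, hw ▸ h.symm⟩
  · exact ⟨⟨w, hw⟩, rfl⟩

theorem IsCompleteColoring.epsRel_of_eq {k : ℕ} {c : V → Fin k} (hc : IsCompleteColoring A c)
    (huv : u ≠ v) (h : c u = c v) : IsCompleteColoring (epsRel A u v) fun x => c x := by
  refine ⟨hc.1.comp_val_of_eq huv h, fun i j hij => ?_⟩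
  obtain ⟨x, y, hxy, rfl, rfl⟩ := hc.2 i j hij
  by_cases hx : x = u
  · subst hx
    exact ⟨⟨v, huv.symm⟩, ⟨y, fun hy => hij (hy ▸ rfl)⟩,
      Or.inr (Or.inl ⟨rfl, fun hy => hij (h.trans (congrArg c hy).symm), hxy⟩), h.symm, rfl⟩
  by_cases hy : y = u
  · subst hy
    exact ⟨⟨x, hx⟩, ⟨v, huv.symm⟩,
      Or.inr (Or.inr ⟨rfl, fun hx => hij ((congrArg c hx).trans h.symm), hxy⟩),
      rfl, h.symm⟩
  exact ⟨⟨x, hx⟩, ⟨y, hy⟩, Or.inl hxy, rfl, rfl⟩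

theorem AcyclicSet.epsRel_of_sources [Finite V] {S : Set V} (hS : AcyclicSet A S)
    (hu : ∀ w ∈ S, ¬ A w u) (hv : ∀ w ∈ S, w ≠ u → ¬ A w v) :
    AcyclicSet (epsRel A u v) {x | x.1 ∈ S} := by
  classical
  obtain ⟨r, hr⟩ := hS.exists_rank
  -- no arc of the class enters the identified vertex, so it can be ranked first
  refine acyclicSet_of_rank (fun x : {w // w ≠ u} => if x.1 = v then 0 else r x + 1)
    fun x hx y hy hxy => ?_
  rcases hxy with h | ⟨hxv, hyv, -⟩ | ⟨-, -, h⟩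
  · have hyv : y.1 ≠ v := fun hyv => hv x hx x.2 (hyv ▸ h)
    by_cases hxv : x.1 = v <;> simp [hxv, hyv, hr _ hx _ hy h]
  · simp [hxv, hyv]
  · exact absurd h (hu x hx)

theorem IsAcyclicColoring.epsRel_of_sources [Finite V] {k : ℕ} {c : V → Fin k}
    (hc : IsAcyclicColoring A c) (huv : u ≠ v) (h : c u = c v)
    (hu : ∀ w, c w = c v → ¬ A w u) (hv : ∀ w, c w = c v → w ≠ u → ¬ A w v) :
    IsAcyclicColoring (epsRel A u v) fun x => c x := by
  refine ⟨hc.1.comp_val_of_eq huv h, fun i => ?_⟩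
  by_cases hi : i = c v
  · subst hi
    exact (hc.2 (c v)).epsRel_of_sources hu hv
  · exact (hc.2 i).epsRel_of_forall_ne
      fun x hx => ⟨hx, fun hxv => hi (hx.symm.trans (congrArg c hxv))⟩

theorem exists_dac_epsRel_eq [Finite V] (hirr : ∀ v, ¬ A v v)
    (hpair : ∃ p q, p ≠ q ∧ ¬(A p q ∧ A q p)) :
    ∃ u v, u ≠ v ∧ ¬(A u v ∧ A v u) ∧ dac (epsRel A u v) = dac A := by
  obtain ⟨c, hac, hco⟩ := exists_coloring_dac hirr
  obtain ⟨p, q, hpq, hna⟩ := hpair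
  obtain ⟨x, y, hcxy, hxy⟩ := not_injective_iff.1 (hco.not_injective hpq hna)
  -- identify two successive sources `u`, `v` of a class with at least two vertices
  have hS := hac.2 (c x)
  obtain ⟨u, hu, hsu⟩ := hS.exists_source ⟨x, rfl⟩
  have hne : ({w | c w = c x} \ {u}).Nonempty := by
    by_cases hxu : x = u
    · exact ⟨y, hcxy.symm, fun hyu => hxy (hxu.trans hyu.symm)⟩
    · exact ⟨x, rfl, hxu⟩
  obtain ⟨v, ⟨hv, hvu⟩, hsv⟩ := (hS.mono sdiff_subset).exists_source hne
  have huv : u ≠ v := Ne.symm hvu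
  have hna' : ¬(A u v ∧ A v u) := fun h => hsu v hv h.2
  have hcuv : c u = c v := hu.trans hv.symm
  have hac' : IsAcyclicColoring (epsRel A u v) fun w => c w :=
    hac.epsRel_of_sources huv hcuv (fun w hw => hsu w (hw.trans hv))
      fun w hw hwu => hsv w ⟨hw.trans hv, hwu⟩
  have hco' : IsCompleteColoring (epsRel A u v) fun w => c w := hco.epsRel_of_eq huv hcuv
  exact ⟨u, v, huv, hna', le_antisymm (dac_epsRel_le hirr huv hna') (le_dac hac' hco')⟩

end Restriction

end Diachromatic

theorem stmt17_general {V : Type*} [Fintype V] (A : V → V → Prop)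
    (hirr : ∀ v : V, ¬ A v v) :
    (∀ u v : V, u ≠ v → ¬(A u v ∧ A v u) →
        dac A - 2 ≤ dac (epsRel A u v) ∧ dac (epsRel A u v) ≤ dac A) ∧
      ((∃ u v : V, u ≠ v ∧ ¬(A u v ∧ A v u)) →
        ∃ u v : V, u ≠ v ∧ ¬(A u v ∧ A v u) ∧
          dac (epsRel A u v) = dac A) :=
  ⟨fun u v huv hna => ⟨dac_sub_two_le_dac_epsRel hirr u v, dac_epsRel_le hirr huv hna⟩,
    exists_dac_epsRel_eq hirr⟩

/-- If `ε` is an elementary dihomomorphism of a digraph `D`, then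
`dac(D) - 2 ≤ dac(ε(D)) ≤ dac(D)`; moreover, if `D` has a pair of nonadjacent
vertices, then some elementary dihomomorphism `ε` of `D` satisfies
`dac(ε(D)) = dac(D)`. -/
theorem stmt17 {V : Type*} [Fintype V] [DecidableEq V] (A : V → V → Prop)
    (hirr : ∀ v : V, ¬ A v v) :
    (∀ u v : V, u ≠ v → ¬(A u v ∧ A v u) →
        dac A - 2 ≤ dac (epsRel A u v) ∧ dac (epsRel A u v) ≤ dac A) ∧
      ((∃ u v : V, u ≠ v ∧ ¬(A u v ∧ A v u)) →
        ∃ u v : V, u ≠ v ∧ ¬(A u v ∧ A v u) ∧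
          dac (epsRel A u v) = dac A) :=
  stmt17_general A hirr
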